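/- arXiv:2507.12050 — 4 statements merged into one kernel-verified Lean document; each statement's English description precedes it below -/
import Mathlib

section
/- Let d be a positive integer, let X and Y be independent random vectors in ℝ^d each having i.i.d. standard normal N(0,1) coordinates, and let C = ⟨X,Y⟩/(‖X‖·‖Y‖) (defined almost surely). Then the variance of C equals 1/d; equivalently, since E[C] = 0, one has E[C²] = 1/d. -/
open MeasureTheory ProbabilityTheory

namespace CosSimAux

noncomputable def gpi (d : ℕ) : Measure (Fin d → ℝ) :=
  Measure.pi (fun _ : Fin d => gaussianReal 0 1)

instance (d : ℕ) : IsProbabilityMeasure (gpi d) := by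
  unfold gpi; infer_instance

noncomputable def g {d : ℕ} (x y : Fin d → ℝ) : ℝ :=
  (∑ i, x i * y i) / (Real.sqrt (∑ i, x i ^ 2) * Real.sqrt (∑ i, y i ^ 2))




lemma measurable_G {d : ℕ} :
    Measurable (fun p : (Fin d → ℝ) × (Fin d → ℝ) => g p.1 p.2) := by
  unfold g
  apply Measurable.div
  · exact Finset.measurable_sum _ fun i _ =>
      ((measurable_pi_apply i).comp measurable_fst).mul
        ((measurable_pi_apply i).comp measurable_snd)
  · exact ((Finset.measurable_sum _ fun i _ =>
      ((measurable_pi_apply i).comp measurable_fst).pow_const 2).sqrt).mul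
      ((Finset.measurable_sum _ fun i _ =>
      ((measurable_pi_apply i).comp measurable_snd).pow_const 2).sqrt)

lemma abs_g_le_one {d : ℕ} (x y : Fin d → ℝ) : |g x y| ≤ 1 := by
  unfold g
  set Sx := ∑ i, x i ^ 2 with hSx
  set Sy := ∑ i, y i ^ 2 with hSy
  have hSx0 : 0 ≤ Sx := Finset.sum_nonneg fun i _ => sq_nonneg _
  have hSy0 : 0 ≤ Sy := Finset.sum_nonneg fun i _ => sq_nonneg _
  have hnum : |∑ i, x i * y i| ≤ Real.sqrt Sx * Real.sqrt Sy := by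
    have h := Finset.sum_mul_sq_le_sq_mul_sq Finset.univ x y
    have : |∑ i, x i * y i| = Real.sqrt ((∑ i, x i * y i) ^ 2) := by
      rw [Real.sqrt_sq_eq_abs]
    rw [this, ← Real.sqrt_mul hSx0]
    exact Real.sqrt_le_sqrt h
  rcases eq_or_ne (Real.sqrt Sx * Real.sqrt Sy) 0 with h0 | h0
  · simp [h0]
  · have hpos : 0 < Real.sqrt Sx * Real.sqrt Sy :=
      lt_of_le_of_ne (mul_nonneg (Real.sqrt_nonneg _) (Real.sqrt_nonneg _)) (Ne.symm h0)
    rw [abs_div, abs_of_pos hpos, div_le_one hpos]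
    exact hnum




lemma gauss_map_neg : (gaussianReal 0 1).map (fun x : ℝ => -x) = gaussianReal 0 1 := by
  have h := gaussianReal_map_const_mul (μ := 0) (v := 1) (-1)
  have he : (fun x : ℝ => -x) = (fun x : ℝ => (-1 : ℝ) * x) := by funext x; ring
  rw [he]
  rw [h]
  norm_num

lemma mp_flip (d : ℕ) (i : Fin d) :
    MeasurePreserving (fun y : Fin d → ℝ => fun k => if k = i then -(y k) else y k)
      (gpi d) (gpi d) := by
  classical
  unfold gpi
  have := measurePreserving_pi (fun _ : Fin d => gaussianReal 0 1)
      (fun _ : Fin d => gaussianReal 0 1)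
      (f := fun k => if k = i then (fun x : ℝ => -x) else id) ?_
  · convert this using 2 with y
    funext k
    by_cases h : k = i <;> simp [h]
  · intro k
    by_cases h : k = i
    · simp only [h, if_pos]
      exact ⟨measurable_neg, gauss_map_neg⟩
    · simp only [if_neg h]
      exact MeasurePreserving.id _

lemma mp_neg (d : ℕ) :
    MeasurePreserving (fun y : Fin d → ℝ => fun k => -(y k)) (gpi d) (gpi d) :=
  measurePreserving_pi _ _ (f := fun _ => fun x : ℝ => -x)
    (fun _ => ⟨measurable_neg, gauss_map_neg⟩)

lemma mp_perm (d : ℕ) (e : Equiv.Perm (Fin d)) :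
    MeasurePreserving (fun y : Fin d → ℝ => y ∘ e) (gpi d) (gpi d) := by
  unfold gpi
  have h := measurePreserving_arrowCongr' (fun _ : Fin d => gaussianReal 0 1)
      (fun _ : Fin d => gaussianReal 0 1) e.symm (MeasurableEquiv.refl ℝ)
      (fun _ => MeasurePreserving.id _)
  convert h using 2 <;> rfl

lemma ae_S_ne (d : ℕ) (hd : 0 < d) :
    ∀ᵐ y ∂(gpi d), (∑ k, y k ^ 2) ≠ 0 := by
  set i0 : Fin d := ⟨0, hd⟩
  have h0 : (gpi d) {y : Fin d → ℝ | y i0 = 0} = 0 := by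
    have : {y : Fin d → ℝ | y i0 = 0} = Function.eval i0 ⁻¹' {0} := rfl
    rw [this]
    apply Measure.pi_eval_preimage_null
    exact (gaussianReal_absolutelyContinuous 0 one_ne_zero) (measure_singleton 0)
  rw [Filter.eventually_iff, mem_ae_iff]
  refine measure_mono_null ?_ h0
  intro y hy
  simp only [Set.mem_compl_iff, Set.mem_setOf_eq, not_not] at hy
  have := (Finset.sum_eq_zero_iff_of_nonneg (fun i _ => sq_nonneg (y i))).mp hy
    i0 (Finset.mem_univ _)
  have hy0 : y i0 = 0 := by
    exact (pow_eq_zero_iff two_ne_zero).mp this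
  exact hy0


lemma integrable_of_abs_le {α : Type*} [MeasurableSpace α] {μ : Measure α}
    [IsFiniteMeasure μ] {f : α → ℝ} (hm : AEStronglyMeasurable f μ) (C : ℝ)
    (h : ∀ a, |f a| ≤ C) : Integrable f μ :=
  memLp_one_iff_integrable.mp (MemLp.of_bound hm C
    (Filter.Eventually.of_forall (by simpa [Real.norm_eq_abs] using h)))

lemma abs_term_le_one {d : ℕ} (y : Fin d → ℝ) (i j : Fin d) :
    |y i * y j / (∑ k, y k ^ 2)| ≤ 1 := by
  set S := ∑ k, y k ^ 2 with hS
  have hS0 : 0 ≤ S := Finset.sum_nonneg fun k _ => sq_nonneg _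
  have hii : y i ^ 2 ≤ S := Finset.single_le_sum (f := fun k => y k ^ 2)
    (fun k _ => sq_nonneg _) (Finset.mem_univ i)
  have hjj : y j ^ 2 ≤ S := Finset.single_le_sum (f := fun k => y k ^ 2)
    (fun k _ => sq_nonneg _) (Finset.mem_univ j)
  have hnum : |y i * y j| ≤ S := by
    have h2 : 2 * |y i| * |y j| ≤ |y i| ^ 2 + |y j| ^ 2 := two_mul_le_add_sq _ _
    rw [abs_mul]
    nlinarith [sq_abs (y i), sq_abs (y j)]
  rcases eq_or_lt_of_le hS0 with h0 | h0
  · simp [← h0]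
  · rw [abs_div, abs_of_pos h0, div_le_one h0]
    exact hnum

lemma meas_term {d : ℕ} (i j : Fin d) :
    Measurable (fun y : Fin d → ℝ => y i * y j / (∑ k, y k ^ 2)) := by
  apply Measurable.div
  · exact (measurable_pi_apply i).mul (measurable_pi_apply j)
  · exact Finset.measurable_sum _ fun k _ => (measurable_pi_apply k).pow_const 2

lemma integrable_term {d : ℕ} (i j : Fin d) :
    Integrable (fun y : Fin d → ℝ => y i * y j / (∑ k, y k ^ 2)) (gpi d) :=
  integrable_of_abs_le (meas_term i j).aestronglyMeasurable 1 (fun y => abs_term_le_one y i j)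

lemma int_cross {d : ℕ} {i j : Fin d} (hij : i ≠ j) :
    ∫ y, y i * y j / (∑ k, y k ^ 2) ∂(gpi d) = 0 := by
  set f : (Fin d → ℝ) → ℝ := fun y => y i * y j / (∑ k, y k ^ 2) with hf
  have hmp := mp_flip d i
  have key : ∫ y, f y ∂(gpi d) = ∫ y, - f y ∂(gpi d) := by
    conv_lhs => rw [← hmp.map_eq]
    rw [integral_map hmp.measurable.aemeasurable (meas_term i j).aestronglyMeasurable]
    congr 1
    funext y
    have h1 : (fun k => if k = i then -(y k) else y k) i = -(y i) := by simp
    have h2 : (fun k => if k = i then -(y k) else y k) j = y j := by simp [hij.symm]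
    have h3 : ∑ k, (if k = i then -(y k) else y k) ^ 2 = ∑ k, y k ^ 2 := by
      apply Finset.sum_congr rfl
      intro k _
      by_cases h : k = i <;> simp [h]
    show f (fun k => if k = i then -(y k) else y k) = - f y
    simp only [hf, h1, h2, h3]
    simp only [if_true, eq_self_iff_true]
    ring
  have := key
  rw [integral_neg] at this
  linarith [this]

lemma int_sq {d : ℕ} (hd : 0 < d) (i : Fin d) :
    ∫ y, y i * y i / (∑ k, y k ^ 2) ∂(gpi d) = 1 / d := by
  set i0 : Fin d := ⟨0, hd⟩
  -- all coordinates have the same integral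
  have hsame : ∀ i : Fin d, ∫ y, y i * y i / (∑ k, y k ^ 2) ∂(gpi d)
      = ∫ y, y i0 * y i0 / (∑ k, y k ^ 2) ∂(gpi d) := by
    intro i
    set e : Equiv.Perm (Fin d) := Equiv.swap i i0 with he
    have hmp := mp_perm d e
    conv_rhs => rw [← hmp.map_eq]
    rw [integral_map hmp.measurable.aemeasurable (meas_term i0 i0).aestronglyMeasurable]
    congr 1
    funext y
    have h3 : ∑ k, (y ∘ e) k ^ 2 = ∑ k, y k ^ 2 := by
      simpa using Equiv.sum_comp e (fun k => y k ^ 2)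
    have h1 : (y ∘ e) i0 = y i := by simp [he, Equiv.swap_apply_right]
    simp only [h3, h1]
  -- sum over i equals 1
  have hsum : ∑ i : Fin d, ∫ y, y i * y i / (∑ k, y k ^ 2) ∂(gpi d) = 1 := by
    rw [← integral_finset_sum _ (fun i _ => integrable_term i i)]
    have : ∀ᵐ y ∂(gpi d), (∑ i, y i * y i / (∑ k, y k ^ 2)) = 1 := by
      filter_upwards [ae_S_ne d hd] with y hy
      rw [← Finset.sum_div]
      rw [div_eq_one_iff_eq hy]
      exact Finset.sum_congr rfl fun k _ => by ring
    rw [integral_congr_ae this, integral_const]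
    simp
  have hd' : (d : ℝ) ≠ 0 := Nat.cast_ne_zero.mpr hd.ne'
  have : (d : ℝ) * ∫ y, y i0 * y i0 / (∑ k, y k ^ 2) ∂(gpi d) = 1 := by
    rw [← hsum]
    rw [Finset.sum_congr rfl (fun i _ => hsame i)]
    simp [Finset.sum_const, mul_comm]
  rw [hsame i]
  field_simp at this ⊢
  linarith


lemma measurable_g_right {d : ℕ} (x : Fin d → ℝ) : Measurable (fun y => g x y) :=
  measurable_G.comp (measurable_const.prodMk measurable_id)

lemma inner_mean_zero {d : ℕ} (x : Fin d → ℝ) : ∫ y, g x y ∂(gpi d) = 0 := by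
  have hmp := mp_neg d
  have key : ∫ y, g x y ∂(gpi d) = ∫ y, - g x y ∂(gpi d) := by
    conv_lhs => rw [← hmp.map_eq]
    rw [integral_map hmp.measurable.aemeasurable (measurable_g_right x).aestronglyMeasurable]
    congr 1
    funext y
    show g x (fun k => -(y k)) = - g x y
    unfold g
    have h1 : ∑ i, x i * -(y i) = -∑ i, x i * y i := by
      rw [← Finset.sum_neg_distrib]; exact Finset.sum_congr rfl fun i _ => by ring
    have h2 : ∑ i, (-(y i)) ^ 2 = ∑ i, y i ^ 2 :=
      Finset.sum_congr rfl fun i _ => by ring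
    rw [h1, h2, neg_div]
  rw [integral_neg] at key
  linarith

lemma inner_sq {d : ℕ} (hd : 0 < d) (x : Fin d → ℝ) (hx : (∑ i, x i ^ 2) ≠ 0) :
    ∫ y, (g x y) ^ 2 ∂(gpi d) = 1 / d := by
  set Sx := ∑ i, x i ^ 2 with hSx
  have hpt : ∀ y : Fin d → ℝ, (g x y) ^ 2
      = ∑ i, ∑ j, (x i * x j / Sx) * (y i * y j / (∑ k, y k ^ 2)) := by
    intro y
    set Sy := ∑ k, y k ^ 2 with hSy
    have hSy0 : 0 ≤ Sy := Finset.sum_nonneg fun k _ => sq_nonneg _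
    have hSx0 : 0 ≤ Sx := Finset.sum_nonneg fun k _ => sq_nonneg _
    have hden : (Real.sqrt Sx * Real.sqrt Sy) ^ 2 = Sx * Sy := by
      rw [mul_pow, Real.sq_sqrt hSx0, Real.sq_sqrt hSy0]
    unfold g
    rw [div_pow, hden, sq (∑ i, x i * y i), Finset.sum_mul_sum, Finset.sum_div]
    refine Finset.sum_congr rfl fun i _ => ?_
    rw [Finset.sum_div]
    refine Finset.sum_congr rfl fun j _ => ?_
    rw [div_mul_div_comm]
    congr 1
    ring
  calc ∫ y, (g x y) ^ 2 ∂(gpi d)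
      = ∫ y, ∑ i, ∑ j, (x i * x j / Sx) * (y i * y j / (∑ k, y k ^ 2)) ∂(gpi d) := by
        exact integral_congr_ae (Filter.Eventually.of_forall hpt)
    _ = ∑ i, ∑ j, (x i * x j / Sx) * ∫ y, y i * y j / (∑ k, y k ^ 2) ∂(gpi d) := by
        rw [integral_finset_sum _ (fun i _ => integrable_finset_sum _
          (fun j _ => (integrable_term i j).const_mul _))]
        refine Finset.sum_congr rfl fun i _ => ?_
        rw [integral_finset_sum _ (fun j _ => (integrable_term i j).const_mul _)]
        exact Finset.sum_congr rfl fun j _ => integral_const_mul _ _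
    _ = ∑ i, (x i * x i / Sx) * (1 / d) := by
        refine Finset.sum_congr rfl fun i _ => ?_
        rw [Finset.sum_eq_single i]
        · rw [int_sq hd i]
        · intro j _ hj
          rw [int_cross (Ne.symm hj), mul_zero]
        · intro h; exact absurd (Finset.mem_univ i) h
    _ = 1 / d := by
        rw [← Finset.sum_mul, ← Finset.sum_div]
        have hxx : ∑ i, x i * x i = Sx := by
          rw [hSx]; exact Finset.sum_congr rfl fun i _ => (sq (x i)).symm
        rw [hxx, div_self hx, one_mul]

lemma integrable_G {d : ℕ} :
    Integrable (fun p : (Fin d → ℝ) × (Fin d → ℝ) => g p.1 p.2) ((gpi d).prod (gpi d)) :=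
  integrable_of_abs_le measurable_G.aestronglyMeasurable 1 (fun p => abs_g_le_one p.1 p.2)

lemma integrable_G_sq {d : ℕ} :
    Integrable (fun p : (Fin d → ℝ) × (Fin d → ℝ) => (g p.1 p.2) ^ 2)
      ((gpi d).prod (gpi d)) := by
  refine integrable_of_abs_le (measurable_G.pow_const 2).aestronglyMeasurable 1 (fun p => ?_)
  rw [abs_pow]
  have h := abs_g_le_one p.1 p.2
  nlinarith [abs_nonneg (g p.1 p.2)]

lemma second_moment {d : ℕ} (hd : 0 < d) :
    ∫ p, (g p.1 p.2) ^ 2 ∂((gpi d).prod (gpi d)) = 1 / d := by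
  rw [integral_prod _ integrable_G_sq]
  have h : ∀ᵐ x ∂(gpi d), (∫ y, (g x y) ^ 2 ∂(gpi d)) = 1 / d := by
    filter_upwards [ae_S_ne d hd] with x hx
    exact inner_sq hd x hx
  rw [integral_congr_ae h]
  simp

lemma mean_zero {d : ℕ} :
    ∫ p, g p.1 p.2 ∂((gpi d).prod (gpi d)) = 0 := by
  rw [integral_prod _ integrable_G]
  simp [inner_mean_zero]


end CosSimAux

open CosSimAux in

/-- Lemma 3 (second part): for `X, Y` independent random vectors in `ℝ^d` with i.i.d.
standard normal coordinates, the cosine similarity `C = ⟨X,Y⟩/(‖X‖·‖Y‖)` has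
variance `1/d`; equivalently (since `E[C] = 0`), `E[C²] = 1/d`. -/
theorem variance_cosine_similarity_eq_one_div
    (d : ℕ) (hd : 0 < d)
    {Ω : Type*} [MeasureSpace Ω] [IsProbabilityMeasure (ℙ : Measure Ω)]
    (X Y : Ω → Fin d → ℝ)
    (hXm : Measurable X) (hYm : Measurable Y)
    (hindep : IndepFun X Y ℙ)
    (hX : Measure.map X ℙ = Measure.pi (fun _ : Fin d => gaussianReal 0 1))
    (hY : Measure.map Y ℙ = Measure.pi (fun _ : Fin d => gaussianReal 0 1)) :
    variance (fun ω => (∑ i, X ω i * Y ω i) /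
        (Real.sqrt (∑ i, X ω i ^ 2) * Real.sqrt (∑ i, Y ω i ^ 2))) ℙ = 1 / d ∧
    ∫ ω, ((∑ i, X ω i * Y ω i) /
        (Real.sqrt (∑ i, X ω i ^ 2) * Real.sqrt (∑ i, Y ω i ^ 2))) ^ 2 ∂ℙ = 1 / d := by
  have hCeq : (fun ω => (∑ i, X ω i * Y ω i) /
      (Real.sqrt (∑ i, X ω i ^ 2) * Real.sqrt (∑ i, Y ω i ^ 2)))
      = fun ω => g (X ω) (Y ω) := rfl
  set C : Ω → ℝ := fun ω => g (X ω) (Y ω) with hC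
  have hT : AEMeasurable (fun ω => (X ω, Y ω)) ℙ := (hXm.prodMk hYm).aemeasurable
  have hmap : Measure.map (fun ω => (X ω, Y ω)) ℙ = (gpi d).prod (gpi d) := by
    have := (indepFun_iff_map_prod_eq_prod_map_map hXm.aemeasurable hYm.aemeasurable).mp hindep
    rw [this, hX, hY]; rfl
  have hCm : Measurable C := measurable_G.comp (hXm.prodMk hYm)
  have hE2 : ∫ ω, (C ω) ^ 2 ∂ℙ = 1 / d := by
    have h := integral_map hT
      (f := fun p : (Fin d → ℝ) × (Fin d → ℝ) => (g p.1 p.2) ^ 2)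
      (measurable_G.pow_const 2).aestronglyMeasurable
    rw [hmap] at h
    rw [show (fun ω => (C ω) ^ 2) = fun ω => (g (X ω) (Y ω)) ^ 2 from rfl]
    rw [← h]
    exact second_moment hd
  have hE1 : ∫ ω, C ω ∂ℙ = 0 := by
    have h := integral_map hT
      (f := fun p : (Fin d → ℝ) × (Fin d → ℝ) => g p.1 p.2)
      measurable_G.aestronglyMeasurable
    rw [hmap] at h
    rw [show (fun ω => C ω) = fun ω => g (X ω) (Y ω) from rfl, ← h]
    exact mean_zero
  have hmem : MemLp C 2 ℙ := by
    refine MemLp.of_bound hCm.aestronglyMeasurable 1 ?_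
    exact Filter.Eventually.of_forall fun ω => by
      simpa [Real.norm_eq_abs] using abs_g_le_one (X ω) (Y ω)
  constructor
  · rw [hCeq, variance_eq_sub hmem]
    have h2 : (∫ ω, (C ^ 2) ω ∂ℙ) = 1 / d := by
      simpa [Pi.pow_apply] using hE2
    show (∫ ω, (C ^ 2) ω ∂ℙ) - (∫ ω, C ω ∂ℙ) ^ 2 = 1 / d
    rw [h2, hE1]
    norm_num
  · rw [hCeq] at *
    exact hE2
end

section
/- Let p, m, d, β be natural numbers with β < p. Let x₀, …, x_{m−1} : Fin d → ℕ be binary vectors (every entry 0 or 1) and let y : Fin d → ℕ be a binary vector with at most β entries equal to 1. Then for every j < m, the j-th base-p digit of the natural number ∑_{t < d} (∑_{i < m} p^i · xᵢ(t)) · y(t) equals ⟨x_j, y⟩; that is, ((∑_{t} (∑_{i} p^i · xᵢ(t)) · y(t)) / p^j) mod p = ∑_{t} x_j(t) · y(t), where / denotes natural-number (floor) division. -/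
lemma sum_pow_mul_lt (p n : ℕ) (hp : 0 < p) (f : ℕ → ℕ) (hf : ∀ i, f i < p) :
    ∑ i ∈ Finset.range n, p ^ i * f i < p ^ n := by
  induction n with
  | zero => simp
  | succ n ih =>
    rw [Finset.sum_range_succ]
    obtain ⟨k, rfl⟩ : ∃ k, p = k + 1 := ⟨p - 1, by omega⟩
    have h2 : (k + 1) ^ n * f n ≤ (k + 1) ^ n * k :=
      Nat.mul_le_mul_left _ (by have := hf n; omega)
    have : (k + 1) ^ n + (k + 1) ^ n * k = (k + 1) ^ (n + 1) := by ring
    omega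

lemma digit_extract (p m : ℕ) (hp : 0 < p) (f : ℕ → ℕ) (hf : ∀ i, f i < p)
    (j : ℕ) (hj : j < m) :
    (∑ i ∈ Finset.range m, p ^ i * f i) / p ^ j % p = f j := by
  have hsplit : ∑ i ∈ Finset.range m, p ^ i * f i
      = ∑ i ∈ Finset.range j, p ^ i * f i + ∑ i ∈ Finset.Ico j m, p ^ i * f i := by
    rw [Finset.range_eq_Ico, ← Finset.sum_Ico_consecutive _ (Nat.zero_le j) (le_of_lt hj),
      ← Finset.range_eq_Ico]
  have hbot : ∑ i ∈ Finset.Ico j m, p ^ i * f i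
      = p ^ j * f j + ∑ i ∈ Finset.Ico (j + 1) m, p ^ i * f i :=
    Finset.sum_eq_sum_Ico_succ_bot hj _
  have hdvd : p ^ (j + 1) ∣ ∑ i ∈ Finset.Ico (j + 1) m, p ^ i * f i := by
    apply Finset.dvd_sum
    intro i hi
    exact Dvd.dvd.mul_right (pow_dvd_pow p (Finset.mem_Ico.mp hi).1) _
  obtain ⟨D, hD⟩ := hdvd
  have heq : ∑ i ∈ Finset.range m, p ^ i * f i
      = ∑ i ∈ Finset.range j, p ^ i * f i + (f j + p * D) * p ^ j := by
    rw [hsplit, hbot, hD, pow_succ]; ring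
  rw [heq, Nat.add_mul_div_right _ _ (pow_pos hp j),
    Nat.div_eq_of_lt (sum_pow_mul_lt p j hp f hf), zero_add,
    Nat.add_mul_mod_self_left, Nat.mod_eq_of_lt (hf j)]

/-- Correctness of the space-efficient encoding (binary case, Section 4.2):
pack `m` binary vectors `x₀, …, x_{m-1}` into `x = ∑ᵢ pⁱ·xᵢ`; if the binary query
`y` has at most `β < p` ones, then the `j`-th base-`p` digit of `⟨x,y⟩` is
`⟨x_j, y⟩`. -/
theorem encode_innerProduct_digit
    (p m d β : ℕ) (hβ : β < p)
    (x : Fin m → Fin d → ℕ) (hx : ∀ i t, x i t = 0 ∨ x i t = 1)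
    (y : Fin d → ℕ) (hy : ∀ t, y t = 0 ∨ y t = 1)
    (hcard : ((Finset.univ : Finset (Fin d)).filter fun t => y t = 1).card ≤ β)
    (j : Fin m) :
    (∑ t, (∑ i : Fin m, p ^ (i : ℕ) * x i t) * y t) / p ^ (j : ℕ) % p
      = ∑ t, x j t * y t := by
  have hp : 0 < p := lt_of_le_of_lt (Nat.zero_le β) hβ
  set g : ℕ → ℕ := fun i => if h : i < m then ∑ t, x ⟨i, h⟩ t * y t else 0 with hg
  have hswap : (∑ t, (∑ i : Fin m, p ^ (i : ℕ) * x i t) * y t)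
      = ∑ i ∈ Finset.range m, p ^ i * g i := by
    rw [← Fin.sum_univ_eq_sum_range (fun i => p ^ i * g i) m]
    simp only [Finset.sum_mul]
    rw [Finset.sum_comm]
    apply Finset.sum_congr rfl
    intro i _
    rw [hg]
    simp only [i.isLt, dif_pos, Finset.mul_sum]
    apply Finset.sum_congr rfl
    intro t _
    ring
  have hbound : ∀ k, g k < p := by
    intro k
    rw [hg]
    by_cases h : k < m
    · simp only [h, dif_pos]
      have hle : ∑ t, x ⟨k, h⟩ t * y t
          ≤ ∑ t, if y t = 1 then 1 else 0 := by
        apply Finset.sum_le_sum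
        intro t _
        rcases hx ⟨k, h⟩ t with h1 | h1 <;> rcases hy t with h2 | h2 <;>
          simp [h1, h2]
      rw [← Finset.card_filter] at hle
      omega
    · simp [h, hp]
  have hgj : g (j : ℕ) = ∑ t, x j t * y t := by
    rw [hg]; simp [j.isLt]
  rw [hswap, digit_extract p m hp g hbound j j.isLt, hgj]
end

section
/- Let p, m, d, β be natural numbers with β < p. Let x₀, …, x_{m−1} : Fin d → ℤ be ternary vectors (entries in {−1,0,1}) and let y : Fin d → ℤ be a ternary vector whose support has at most β elements. Define the natural numbers S⁺ = ∑_{i<m} p^i · (⟨xᵢ⁺,y⁺⟩ + ⟨xᵢ⁻,y⁻⟩) and S⁻ = ∑_{i<m} p^i · (⟨xᵢ⁺,y⁻⟩ + ⟨xᵢ⁻,y⁺⟩). Then for every j < m, ((S⁺ / p^j) mod p) − ((S⁻ / p^j) mod p) = ⟨x_j, y⟩ as integers, where / denotes natural-number (floor) division. -/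
lemma idface_sum_lt_pow (p : ℕ) (hp : 0 < p) (a : ℕ → ℕ) (ha : ∀ i, a i < p) (j : ℕ) :
    ∑ i ∈ Finset.range j, p ^ i * a i < p ^ j := by
  induction j with
  | zero => simp
  | succ j ih =>
    rw [Finset.sum_range_succ, pow_succ]
    have h1 := ha j
    have h2 : (0:ℕ) < p ^ j := pow_pos hp j
    nlinarith

lemma idface_digit_extract (p m : ℕ) (hp : 0 < p) (a : ℕ → ℕ) (ha : ∀ i, a i < p)
    (j : ℕ) (hj : j < m) :
    (∑ i ∈ Finset.range m, p ^ i * a i) / p ^ j % p = a j := by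
  have hsplit : ∑ i ∈ Finset.range m, p ^ i * a i =
      (∑ i ∈ Finset.range j, p ^ i * a i) +
        p ^ j * (a j + p * ∑ k ∈ Finset.range (m - j - 1), p ^ k * a (j + 1 + k)) := by
    rw [← Finset.sum_range_add_sum_Ico _ (le_of_lt hj)]
    congr 1
    rw [Finset.sum_Ico_eq_sum_range]
    have hm : m - j = (m - j - 1) + 1 := by omega
    rw [hm, Finset.sum_range_succ', add_comm, mul_add]
    congr 1
    simp only [Nat.add_sub_cancel, Finset.mul_sum]
    apply Finset.sum_congr rfl
    intro k _
    have hk : j + (k + 1) = j + 1 + k := by omega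
    rw [hk, pow_add, pow_add]
    ring
  rw [hsplit, Nat.add_mul_div_left _ _ (pow_pos hp j),
    Nat.div_eq_of_lt (idface_sum_lt_pow p hp a ha j), zero_add,
    Nat.add_mul_mod_self_left, Nat.mod_eq_of_lt (ha j)]

/-- End-to-end correctness of IDFace.IP_DB followed by Decode (Sections 4.2–4.3):
for ternary vectors `x₀, …, x_{m-1}` and a ternary query `y` with support of size
at most `β < p`, the two aggregated scores
`S⁺ = ∑ᵢ pⁱ·(⟨xᵢ⁺,y⁺⟩ + ⟨xᵢ⁻,y⁻⟩)` and `S⁻ = ∑ᵢ pⁱ·(⟨xᵢ⁺,y⁻⟩ + ⟨xᵢ⁻,y⁺⟩)`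
decode, digit by digit in base `p`, to the inner products: for every `j < m`,
`(S⁺/pʲ mod p) - (S⁻/pʲ mod p) = ⟨x_j, y⟩`.  Here `z⁺ t = max (z t) 0` and
`z⁻ t = max (-z t) 0` (taken as natural numbers via `Int.toNat`). -/
theorem encode_decode_ternary_innerProduct
    (p m d β : ℕ) (hβ : β < p)
    (x : Fin m → Fin d → ℤ)
    (hx : ∀ i t, x i t = -1 ∨ x i t = 0 ∨ x i t = 1)
    (y : Fin d → ℤ)
    (hy : ∀ t, y t = -1 ∨ y t = 0 ∨ y t = 1)
    (hsupp : ((Finset.univ : Finset (Fin d)).filter fun t => y t ≠ 0).card ≤ β)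
    (j : Fin m) :
    (((∑ i : Fin m, p ^ (i : ℕ) *
          ((∑ t, (max (x i t) 0).toNat * (max (y t) 0).toNat) +
            ∑ t, (max (-(x i t)) 0).toNat * (max (-(y t)) 0).toNat))
        / p ^ (j : ℕ) % p : ℕ) : ℤ)
      - (((∑ i : Fin m, p ^ (i : ℕ) *
          ((∑ t, (max (x i t) 0).toNat * (max (-(y t)) 0).toNat) +
            ∑ t, (max (-(x i t)) 0).toNat * (max (y t) 0).toNat))
        / p ^ (j : ℕ) % p : ℕ) : ℤ)
      = ∑ t, x j t * y t := by
  have hp : 0 < p := lt_of_le_of_lt (Nat.zero_le β) hβ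
  set a : ℕ → ℕ := fun i => if h : i < m then
      ((∑ t, (max (x ⟨i, h⟩ t) 0).toNat * (max (y t) 0).toNat) +
        ∑ t, (max (-(x ⟨i, h⟩ t)) 0).toNat * (max (-(y t)) 0).toNat) else 0 with ha_def
  set b : ℕ → ℕ := fun i => if h : i < m then
      ((∑ t, (max (x ⟨i, h⟩ t) 0).toNat * (max (-(y t)) 0).toNat) +
        ∑ t, (max (-(x ⟨i, h⟩ t)) 0).toNat * (max (y t) 0).toNat) else 0 with hb_def
  -- support count bound
  have hcard : ∀ (u : Fin d → ℤ), (∀ t, u t = -1 ∨ u t = 0 ∨ u t = 1) →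
      ((∑ t, (max (u t) 0).toNat * (max (y t) 0).toNat) +
        ∑ t, (max (-(u t)) 0).toNat * (max (-(y t)) 0).toNat) < p ∧
      ((∑ t, (max (u t) 0).toNat * (max (-(y t)) 0).toNat) +
        ∑ t, (max (-(u t)) 0).toNat * (max (y t) 0).toNat) < p := by
    intro u hu
    have key : ∀ (v w : Fin d → ℤ), (∀ t, v t = -1 ∨ v t = 0 ∨ v t = 1) →
        ((∑ t, (max (v t) 0).toNat * (max (w t) 0).toNat) +
          ∑ t, (max (-(v t)) 0).toNat * (max (-(w t)) 0).toNat) ≤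
          ((Finset.univ : Finset (Fin d)).filter fun t => w t ≠ 0).card →
        True := fun _ _ _ _ => trivial
    constructor
    · calc _ = ∑ t, ((max (u t) 0).toNat * (max (y t) 0).toNat +
            (max (-(u t)) 0).toNat * (max (-(y t)) 0).toNat) := by
            rw [Finset.sum_add_distrib]
        _ ≤ ∑ t, (if y t ≠ 0 then 1 else 0) := by
            apply Finset.sum_le_sum
            intro t _
            rcases hu t with h1 | h1 | h1 <;> rcases hy t with h2 | h2 | h2 <;>
              simp [h1, h2]
        _ = ((Finset.univ : Finset (Fin d)).filter fun t => y t ≠ 0).card := by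
            rw [Finset.card_filter]
        _ ≤ β := hsupp
        _ < p := hβ
    · calc _ = ∑ t, ((max (u t) 0).toNat * (max (-(y t)) 0).toNat +
            (max (-(u t)) 0).toNat * (max (y t) 0).toNat) := by
            rw [Finset.sum_add_distrib]
        _ ≤ ∑ t, (if y t ≠ 0 then 1 else 0) := by
            apply Finset.sum_le_sum
            intro t _
            rcases hu t with h1 | h1 | h1 <;> rcases hy t with h2 | h2 | h2 <;>
              simp [h1, h2]
        _ = ((Finset.univ : Finset (Fin d)).filter fun t => y t ≠ 0).card := by
            rw [Finset.card_filter]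
        _ ≤ β := hsupp
        _ < p := hβ
  have haP : ∀ i, a i < p := by
    intro i
    by_cases h : i < m
    · simp only [ha_def, dif_pos h]
      exact (hcard _ (hx ⟨i, h⟩)).1
    · simp only [ha_def, dif_neg h]; exact hp
  have hbP : ∀ i, b i < p := by
    intro i
    by_cases h : i < m
    · simp only [hb_def, dif_pos h]
      exact (hcard _ (hx ⟨i, h⟩)).2
    · simp only [hb_def, dif_neg h]; exact hp
  have hS1 : (∑ i : Fin m, p ^ (i : ℕ) *
          ((∑ t, (max (x i t) 0).toNat * (max (y t) 0).toNat) +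
            ∑ t, (max (-(x i t)) 0).toNat * (max (-(y t)) 0).toNat)) =
      ∑ i ∈ Finset.range m, p ^ i * a i := by
    rw [Finset.sum_range fun i => p ^ i * a i]
    apply Finset.sum_congr rfl
    intro i _
    simp [ha_def, i.isLt]
  have hS2 : (∑ i : Fin m, p ^ (i : ℕ) *
          ((∑ t, (max (x i t) 0).toNat * (max (-(y t)) 0).toNat) +
            ∑ t, (max (-(x i t)) 0).toNat * (max (y t) 0).toNat)) =
      ∑ i ∈ Finset.range m, p ^ i * b i := by
    rw [Finset.sum_range fun i => p ^ i * b i]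
    apply Finset.sum_congr rfl
    intro i _
    simp [hb_def, i.isLt]
  rw [hS1, hS2, idface_digit_extract p m hp a haP j j.isLt,
    idface_digit_extract p m hp b hbP j j.isLt]
  simp only [ha_def, hb_def, dif_pos j.isLt, Fin.eta]
  push_cast
  rw [← Finset.sum_add_distrib, ← Finset.sum_add_distrib, ← Finset.sum_sub_distrib]
  apply Finset.sum_congr rfl
  intro t _
  rcases hx j t with h1 | h1 | h1 <;> rcases hy t with h2 | h2 | h2 <;>
    simp [h1, h2]
end

section
/- Let d be a natural number with d mod 3 ≠ 1. Then for every natural number α ≤ d, C(d,α)·2^α ≤ C(d, ⌊2d/3⌋)·2^{⌊2d/3⌋}, where C(d,k) is the binomial coefficient and ⌊2d/3⌋ denotes the floor of 2d/3. -/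
private lemma key_id (d α : ℕ) :
    d.choose (α+1) * 2 ^ (α+1) * (α+1) = d.choose α * 2 ^ α * (2 * (d - α)) := by
  have h := Nat.choose_succ_right_eq d α
  calc d.choose (α+1) * 2 ^ (α+1) * (α+1)
      = d.choose (α+1) * (α+1) * 2 ^ (α+1) := by ring
    _ = d.choose α * (d - α) * 2 ^ (α+1) := by rw [h]
    _ = d.choose α * 2 ^ α * (2 * (d - α)) := by rw [pow_succ]; ring

private lemma step_up (d α : ℕ) (h : 3 * α + 3 ≤ 2 * d) :
    d.choose α * 2 ^ α ≤ d.choose (α+1) * 2 ^ (α+1) := by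
  have hk := key_id d α
  have h1 : α + 1 ≤ 2 * (d - α) := by omega
  have : d.choose α * 2 ^ α * (α+1) ≤ d.choose (α+1) * 2 ^ (α+1) * (α+1) := by
    rw [hk]
    exact Nat.mul_le_mul_left _ h1
  exact Nat.le_of_mul_le_mul_right this (by omega)

private lemma step_down (d α : ℕ) (h : 2 * d ≤ 3 * α + 1) :
    d.choose (α+1) * 2 ^ (α+1) ≤ d.choose α * 2 ^ α := by
  have hk := key_id d α
  have h1 : 2 * (d - α) ≤ α + 1 := by omega
  have : d.choose (α+1) * 2 ^ (α+1) * (α+1) ≤ d.choose α * 2 ^ α * (α+1) := by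
    rw [hk]
    exact Nat.mul_le_mul_left _ h1
  exact Nat.le_of_mul_le_mul_right this (by omega)

/-- For `d` not congruent to `1` modulo `3`, the function `α ↦ C(d,α)·2^α`
(the size of the codeword set `Z^d_α`) attains its maximum over `α ≤ d` at
`α = ⌊2d/3⌋`. -/
theorem choose_two_pow_le_max_at_two_thirds
    (d : ℕ) (hd : d % 3 ≠ 1) (α : ℕ) (hα : α ≤ d) :
    d.choose α * 2 ^ α ≤ d.choose (2 * d / 3) * 2 ^ (2 * d / 3) := by
  set m := 2 * d / 3 with hm
  rcases le_or_gt α m with hle | hgt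
  · -- increasing part: induct on m - α
    have : ∀ k α, α + k = m → d.choose α * 2 ^ α ≤ d.choose m * 2 ^ m := by
      intro k
      induction k with
      | zero => intro a ha; subst ha; simp
      | succ n ih =>
        intro a ha
        have h1 : 3 * a + 3 ≤ 2 * d := by omega
        exact (step_up d a h1).trans (ih (a+1) (by omega))
    exact this (m - α) α (by omega)
  · have h2m : 2 * d ≤ 3 * m + 1 := by omega
    have : ∀ k α, α = m + k → d.choose α * 2 ^ α ≤ d.choose m * 2 ^ m := by
      intro k
      induction k with
      | zero => intro a ha; subst ha; simp
      | succ n ih =>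
        intro a ha
        have : a = (m + n) + 1 := by omega
        subst this
        exact (step_down d (m+n) (by omega)).trans (ih (m+n) rfl)
    exact this (α - m) α (by omega)
end
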